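/- Let (X,d) be a metric space, T : X → X a generalized quasi-contraction with constant q ∈ [0,1). Then for every x ∈ X and every n ∈ ℕ with n ≥ 1 there exists k with 1 ≤ k ≤ n such that d(x, Tᵏx) = δ[O_T(x,n)], i.e. the diameter of the finite orbit O_T(x,n) = {x, Tx, ..., Tⁿx} is attained as the distance from x to some iterate Tᵏx. -/

import Mathlib

/-! If the diameter `D` of `{x, Tx, …, Tⁿx}` were realised only by a pair `Tⁱx, Tʲx` with
`1 ≤ i < j ≤ n`, then all nine distances on the right-hand side of the contraction condition for
the pair `(Tⁱ⁻¹x, Tʲ⁻¹x)` are distances inside the orbit (the largest index involved is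
`max (i + 1) j ≤ n`), so `D ≤ q D` and `D = 0`. Hence the diameter is attained at a pair
containing `x`. -/

open Function

def IsGeneralizedQuasiContraction {X : Type*} [PseudoMetricSpace X] (T : X → X) (q : ℝ) : Prop :=
  ∀ x y : X, dist (T x) (T y) ≤ q * (max (dist x y) (max (dist x (T x)) (max (dist y (T y))
    (max (dist x (T y)) (max (dist y (T x)) (max (dist (T (T x)) x) (max (dist (T (T x)) (T x))
    (max (dist (T (T x)) y) (dist (T (T x)) (T y))))))))))

theorem Nat.exists_forall_le_apply_of_le {α : Type*} [LinearOrder α] (f : ℕ → ℕ → α) (n : ℕ) :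
    ∃ i ≤ n, ∃ j ≤ n, ∀ a ≤ n, ∀ b ≤ n, f a b ≤ f i j := by
  obtain ⟨⟨i, j⟩, hij, hmax⟩ := (Finset.Iic n ×ˢ Finset.Iic n).exists_max_image
    (fun p => f p.1 p.2) ⟨(0, 0), by simp⟩
  simp only [Finset.mem_product, Finset.mem_Iic] at hij
  exact ⟨i, hij.1, j, hij.2, fun a ha b hb => hmax (a, b) (by simp [ha, hb])⟩

namespace IsGeneralizedQuasiContraction

variable {X : Type*} [PseudoMetricSpace X] {T : X → X} {q : ℝ} {x : X} {n : ℕ} {D : ℝ}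

theorem dist_iterate_succ_le (hT : IsGeneralizedQuasiContraction T q) (hq : 0 ≤ q)
    (hD : ∀ i ≤ n, ∀ j ≤ n, dist (T^[i] x) (T^[j] x) ≤ D) {a b : ℕ} (ha : a + 2 ≤ n)
    (hb : b + 1 ≤ n) : dist (T^[a + 1] x) (T^[b + 1] x) ≤ q * D := by
  have h := hT (T^[a] x) (T^[b] x)
  simp only [← iterate_succ_apply'] at h
  refine h.trans (mul_le_mul_of_nonneg_left ?_ hq)
  simp only [max_le_iff]
  refine ⟨?_, ?_, ?_, ?_, ?_, ?_, ?_, ?_, ?_⟩ <;> exact hD _ (by omega) _ (by omega)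

theorem dist_iterate_le_mul (hT : IsGeneralizedQuasiContraction T q) (hq : 0 ≤ q)
    (hD : ∀ i ≤ n, ∀ j ≤ n, dist (T^[i] x) (T^[j] x) ≤ D) {i j : ℕ} (hi : 1 ≤ i) (hin : i ≤ n)
    (hj : 1 ≤ j) (hjn : j ≤ n) : dist (T^[i] x) (T^[j] x) ≤ q * D := by
  wlog hij : i ≤ j generalizing i j
  · exact dist_comm (T^[i] x) (T^[j] x) ▸ this hj hjn hi hin (by omega)
  rcases hij.eq_or_lt with rfl | hlt
  · simpa using mul_nonneg hq (dist_nonneg.trans (hD 0 (Nat.zero_le n) 0 (Nat.zero_le n)))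
  obtain ⟨a, rfl⟩ : ∃ a, i = a + 1 := ⟨i - 1, by omega⟩
  obtain ⟨b, rfl⟩ : ∃ b, j = b + 1 := ⟨j - 1, by omega⟩
  exact hT.dist_iterate_succ_le hq hD (by omega) hjn

theorem dist_iterate_le_max (hT : IsGeneralizedQuasiContraction T q) (hq : 0 ≤ q)
    (hD : ∀ i ≤ n, ∀ j ≤ n, dist (T^[i] x) (T^[j] x) ≤ D) {M : ℝ}
    (hM : ∀ k, 1 ≤ k → k ≤ n → dist x (T^[k] x) ≤ M) {i j : ℕ} (hi : i ≤ n) (hj : j ≤ n) :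
    dist (T^[i] x) (T^[j] x) ≤ max M (q * D) := by
  rcases Nat.eq_zero_or_pos i with rfl | hi0 <;> rcases Nat.eq_zero_or_pos j with rfl | hj0
  · exact le_max_of_le_right (by simpa using mul_nonneg hq (dist_nonneg.trans (hD 0 hi 0 hi)))
  · exact le_max_of_le_left (hM j hj0 hj)
  · exact le_max_of_le_left (dist_comm (T^[i] x) x ▸ hM i hi0 hi)
  · exact le_max_of_le_right (hT.dist_iterate_le_mul hq hD hi0 hi hj0 hj)

end IsGeneralizedQuasiContraction

/-- The diameter of the finite orbit `{x, Tx, …, Tⁿx}` of a generalized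
quasi-contraction is attained as the distance from `x` to some iterate `Tᵏx`, `1 ≤ k ≤ n`. -/
theorem stmt5 {X : Type*} [MetricSpace X] (T : X → X) (q : ℝ) (hq0 : 0 ≤ q) (hq1 : q < 1)
    (hT : ∀ x y : X, dist (T x) (T y) ≤ q * (max (dist x y) (max (dist x (T x)) (max (dist y (T y)) (max (dist x (T y)) (max (dist y (T x)) (max (dist (T (T x)) x) (max (dist (T (T x)) (T x)) (max (dist (T (T x)) y) (dist (T (T x)) (T y)))))))))))
    : ∀ (x : X) (n : ℕ), 1 ≤ n → ∃ k : ℕ, 1 ≤ k ∧ k ≤ n ∧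
      ∀ i ≤ n, ∀ j ≤ n, dist (T^[i] x) (T^[j] x) ≤ dist x (T^[k] x) := by
  intro x n hn
  obtain ⟨k, hk, hkmax⟩ := (Finset.Icc 1 n).exists_max_image (fun k => dist x (T^[k] x))
    (Finset.nonempty_Icc.2 hn)
  obtain ⟨i, hi, j, hj, hD⟩ :=
    Nat.exists_forall_le_apply_of_le (fun a b => dist (T^[a] x) (T^[b] x)) n
  rw [Finset.mem_Icc] at hk
  refine ⟨k, hk.1, hk.2, fun a ha b hb => (hD a ha b hb).trans ?_⟩
  have hmax := IsGeneralizedQuasiContraction.dist_iterate_le_max hT hq0 hD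
    (fun m h1 h2 => hkmax m (Finset.mem_Icc.2 ⟨h1, h2⟩)) hi hj
  rcases le_max_iff.1 hmax with h | h
  · exact h
  · have : dist (T^[i] x) (T^[j] x) ≤ 0 := by nlinarith [dist_nonneg (x := T^[i] x) (y := T^[j] x)]
    exact this.trans dist_nonneg
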